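/- For λ > −1, t ∈ ℝ and m = 2, the recurrence coefficients β_n(t;λ) of the monic polynomials orthogonal with respect to the generalised quartic Freud weight |x|^{2λ+1} exp(t x² − x⁴) satisfy the discrete Painlevé I equation 4 β_n (β_{n−1} + β_n + β_{n+1}) − 2 t β_n = n + (λ + 1/2)(1 − (−1)ⁿ) for all n ≥ 1. -/

import Mathlib

open MeasureTheory Real Polynomial Filter Set Topology

/-!
Let `L p = ∫ p w` for the weight `w = |x|^(2λ+1) exp(t x² - x⁴)`, and `h_k = L (P_k²) > 0`.
The weight satisfies the Pearson equation `w' = ((2λ+1)/x + 2tx - 4x³) w` away from `0`, so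
integrating `(f w)'` over `ℝ` for `f = x g` gives
`L f' + (2λ+1) L g + 2t L (x f) - 4 L (x³ f) = 0`. Take `f = P_n P_{n-1}`, which vanishes at `0`
because one of the two factors is odd. Orthogonality and the three-term recurrence turn every term
into a multiple of `h_{n-1}`: `L f' = n h_{n-1}`, `L (x f) = β_n h_{n-1}`,
`L (x³ f) = β_n (β_{n-1} + β_n + β_{n+1}) h_{n-1}`, and `2 L g = (1 - (-1)ⁿ) h_{n-1}` by parity.
Dividing by `h_{n-1}` gives the discrete Painlevé I equation.
-/

namespace Polynomial

structure IsMonicOrthogonal {R : Type*} [CommRing R] (L : R[X] →ₗ[R] R) (P : ℕ → R[X]) :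
    Prop where
  monic : ∀ n, (P n).Monic
  natDegree_eq : ∀ n, (P n).natDegree = n
  map_mul_eq_zero : ∀ j k, j ≠ k → L (P j * P k) = 0

namespace IsMonicOrthogonal

variable {R : Type*} [CommRing R] {L : R[X] →ₗ[R] R} {P : ℕ → R[X]} {β : ℕ → R}

theorem coeff_self (hP : IsMonicOrthogonal L P) (n : ℕ) : (P n).coeff n = 1 := by
  simpa [hP.natDegree_eq n] using (hP.monic n).coeff_natDegree

theorem degree_sub_C_mul_lt (hP : IsMonicOrthogonal L P) {q : R[X]} {k : ℕ}
    (hq : q.natDegree ≤ k) : (q - C (q.coeff k) * P k).degree < k := by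
  rw [degree_lt_iff_coeff_zero]
  intro m hm
  rcases hm.eq_or_lt with rfl | hm
  · simp [coeff_C_mul, hP.coeff_self]
  · rw [coeff_sub, coeff_C_mul, natDegree_le_iff_coeff_eq_zero.mp hq m hm,
      coeff_eq_zero_of_natDegree_lt (p := P k) (by rwa [hP.natDegree_eq]), mul_zero, sub_zero]

theorem map_mul_eq_zero_of_degree_lt (hP : IsMonicOrthogonal L P) {q : R[X]} {m : ℕ}
    (hq : q.degree < m) : L (q * P m) = 0 := by
  suffices h : ∀ k ≤ m, ∀ q : R[X], q.degree < k → L (q * P m) = 0 from h m le_rfl q hq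
  intro k
  induction k with
  | zero => simp
  | succ k ih =>
    intro hkm q hq
    have hqk : q.natDegree ≤ k := natDegree_le_iff_coeff_eq_zero.mpr fun N hN =>
      (degree_lt_iff_coeff_zero q _).mp hq N hN
    have hsplit : q * P m = (q - C (q.coeff k) * P k) * P m + q.coeff k • (P k * P m) := by
      rw [smul_eq_C_mul]; ring
    rw [hsplit, map_add, map_smul, hP.map_mul_eq_zero k m (by omega), smul_zero, add_zero]
    exact ih (by omega) _ (hP.degree_sub_C_mul_lt hqk)

theorem map_mul_eq_coeff_mul (hP : IsMonicOrthogonal L P) {q : R[X]} {k : ℕ}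
    (hq : q.natDegree ≤ k) : L (q * P k) = q.coeff k * L (P k * P k) := by
  have hsplit : q * P k = (q - C (q.coeff k) * P k) * P k + q.coeff k • (P k * P k) := by
    rw [smul_eq_C_mul]; ring
  rw [hsplit, map_add, map_smul, hP.map_mul_eq_zero_of_degree_lt (hP.degree_sub_C_mul_lt hq),
    smul_eq_mul, zero_add]

theorem natDegree_X_pow_mul_le (hP : IsMonicOrthogonal L P) (n k : ℕ) :
    (X ^ n * P k).natDegree ≤ k + n :=
  natDegree_mul_le.trans (by rw [hP.natDegree_eq, add_comm]; gcongr; exact natDegree_X_pow_le n)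

theorem map_X_pow_mul_mul (hP : IsMonicOrthogonal L P) (n k : ℕ) :
    L (X ^ n * P k * P (k + n)) = L (P (k + n) * P (k + n)) := by
  rw [hP.map_mul_eq_coeff_mul (hP.natDegree_X_pow_mul_le n k), coeff_X_pow_mul, hP.coeff_self,
    one_mul]

theorem map_derivative_mul (hP : IsMonicOrthogonal L P) (k : ℕ) :
    L (derivative (P (k + 1) * P k)) = (k + 1) * L (P k * P k) := by
  have hderiv_le : ∀ n, (derivative (P n)).natDegree ≤ n - 1 := fun n =>
    (natDegree_derivative_le _).trans_eq (by rw [hP.natDegree_eq])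
  have hcross : L (P (k + 1) * derivative (P k)) = 0 := by
    rw [mul_comm]
    exact hP.map_mul_eq_zero_of_degree_lt ((degree_le_of_natDegree_le (hderiv_le k)).trans_lt
      (by exact_mod_cast (by omega : k - 1 < k + 1)))
  rw [derivative_mul, map_add, hcross, add_zero,
    hP.map_mul_eq_coeff_mul (by simpa using hderiv_le (k + 1)), coeff_derivative, hP.coeff_self]
  ring

section Recurrence

-- At `k = 0`, `P (k - 1)` is `P 0` (truncated subtraction); the lemmas that use the recurrence
-- there also assume `β 0 = 0`.
variable (hP : IsMonicOrthogonal L P) (hrec : ∀ k, X * P k = P (k + 1) + C (β k) * P (k - 1))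
include hP hrec

theorem map_X_mul_succ_mul (k : ℕ) : L (X * P (k + 1) * P k) = β (k + 1) * L (P k * P k) := by
  rw [hrec, add_mul, map_add, mul_assoc, C_mul', map_smul, hP.map_mul_eq_zero _ _ (by omega),
    Nat.add_sub_cancel, smul_eq_mul, zero_add]

theorem map_mul_self_succ (k : ℕ) :
    L (P (k + 1) * P (k + 1)) = β (k + 1) * L (P k * P k) := by
  rw [← hP.map_X_mul_succ_mul hrec, ← pow_one X, ← hP.map_X_pow_mul_mul 1 k]
  ring_nf

theorem map_X_sq_mul_mul_self (hβ0 : β 0 = 0) (k : ℕ) :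
    L (X ^ 2 * P k * P k) = (β (k + 1) + β k) * L (P k * P k) := by
  have hsplit : X ^ 2 * P k * P k = X ^ 1 * P k * P (k + 1) + β k • (X * P k * P (k - 1)) := by
    rw [smul_eq_C_mul]; linear_combination (X * P k) * hrec k
  have hlow : β k * L (X * P k * P (k - 1)) = β k * L (P k * P k) := by
    cases k with
    | zero => simp [hβ0]
    | succ j => rw [Nat.add_sub_cancel, hP.map_X_mul_succ_mul hrec, hP.map_mul_self_succ hrec]
  rw [hsplit, map_add, map_smul, smul_eq_mul, hlow, hP.map_X_pow_mul_mul,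
    hP.map_mul_self_succ hrec]
  ring

theorem map_X_pow_three_mul (hβ0 : β 0 = 0) (k : ℕ) :
    L (X ^ 3 * (P (k + 1) * P k))
      = β (k + 1) * (β k + β (k + 1) + β (k + 2)) * L (P k * P k) := by
  have hsplit : X ^ 3 * (P (k + 1) * P k)
      = X ^ 2 * P k * P (k + 2) + β (k + 1) • (X ^ 2 * P k * P k) := by
    have h := hrec (k + 1)
    rw [Nat.add_sub_cancel] at h
    rw [smul_eq_C_mul]; linear_combination (X ^ 2 * P k) * h
  rw [hsplit, map_add, map_smul, smul_eq_mul, hP.map_X_pow_mul_mul, hP.map_mul_self_succ hrec,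
    hP.map_mul_self_succ hrec, hP.map_X_sq_mul_mul_self hrec hβ0]
  ring

theorem eval_neg (hβ0 : β 0 = 0) (k : ℕ) (x : R) :
    (P k).eval (-x) = (-1) ^ k * (P k).eval x := by
  have hP0 : P 0 = 1 := eq_one_of_monic_natDegree_zero (hP.monic 0) (hP.natDegree_eq 0)
  induction k using Nat.twoStepInduction with
  | zero => simp [hP0]
  | one =>
    have hP1 : P 1 = X := by simpa [hP0, hβ0] using (hrec 0).symm
    simp [hP1]
  | more k ih₀ ih₁ =>
    rw [show P (k + 2) = X * P (k + 1) - C (β (k + 1)) * P k by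
      rw [hrec, Nat.add_sub_cancel]; ring]
    simp only [eval_sub, eval_mul, eval_X, eval_C, ih₀, ih₁]
    ring

theorem X_mul_divX_of_odd [IsAddTorsionFree R] (hβ0 : β 0 = 0) {k : ℕ} (hk : Odd k) :
    X * (P k).divX = P k := by
  have h := hP.eval_neg hrec hβ0 k 0
  rw [neg_zero, hk.neg_one_pow, neg_one_mul, self_eq_neg, ← coeff_zero_eq_eval_zero] at h
  simpa [h] using X_mul_divX_add (P k)

theorem exists_mul_eq_X_mul_and_two_mul_map [IsAddTorsionFree R] (hβ0 : β 0 = 0) (k : ℕ) :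
    ∃ g, P (k + 1) * P k = X * g ∧ 2 * L g = (1 - (-1) ^ (k + 1)) * L (P k * P k) := by
  have hdivX : ∀ n, (P n).divX.natDegree = n - 1 := fun n => by
    rw [natDegree_divX_eq_natDegree_tsub_one, hP.natDegree_eq]
  rcases Nat.even_or_odd k with hk | hk
  · refine ⟨(P (k + 1)).divX * P k,
      by rw [← mul_assoc, hP.X_mul_divX_of_odd hrec hβ0 hk.add_one], ?_⟩
    rw [hP.map_mul_eq_coeff_mul (by simp [hdivX]), coeff_divX, hP.coeff_self,
      hk.add_one.neg_one_pow]
    ring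
  · refine ⟨P (k + 1) * (P k).divX, by rw [mul_left_comm, hP.X_mul_divX_of_odd hrec hβ0 hk], ?_⟩
    have hlt : ((P k).divX).degree < ↑(k + 1) :=
      (degree_le_of_natDegree_le (hdivX k).le).trans_lt
        (by exact_mod_cast (by omega : k - 1 < k + 1))
    rw [mul_comm (P (k + 1)), hP.map_mul_eq_zero_of_degree_lt hlt, hk.add_one.neg_one_pow]
    ring

end Recurrence

theorem discrete_painleve_I_of_pearson {K : Type*} [Field K] [CharZero K] {L : K[X] →ₗ[K] K}
    {P : ℕ → K[X]} {β : ℕ → K} (hP : IsMonicOrthogonal L P)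
    (hrec : ∀ k, X * P k = P (k + 1) + C (β k) * P (k - 1)) (hβ0 : β 0 = 0) {lam t : K}
    (hpearson : ∀ g : K[X], L (derivative (X * g)) + (2 * lam + 1) * L g
      + 2 * t * L (X * (X * g)) - 4 * L (X ^ 3 * (X * g)) = 0)
    {k : ℕ} (hk : L (P k * P k) ≠ 0) :
    4 * β (k + 1) * (β k + β (k + 1) + β (k + 2)) - 2 * t * β (k + 1)
      = (k + 1) + (lam + 1 / 2) * (1 - (-1) ^ (k + 1)) := by
  obtain ⟨g, hg, hLg⟩ := hP.exists_mul_eq_X_mul_and_two_mul_map hrec hβ0 k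
  have h := hpearson g
  rw [← hg, hP.map_derivative_mul, ← mul_assoc, hP.map_X_mul_succ_mul hrec,
    hP.map_X_pow_three_mul hrec hβ0] at h
  refine mul_right_cancel₀ hk ?_
  linear_combination -h + (lam + 1 / 2) * hLg

end IsMonicOrthogonal
end Polynomial

theorem integral_eq_zero_of_hasDerivAt_of_ne_zero {E : Type*} [NormedAddCommGroup E]
    [NormedSpace ℝ E] [CompleteSpace E] {F F' : ℝ → E} (hcont : ContinuousAt F 0)
    (hderiv : ∀ x ≠ 0, HasDerivAt F (F' x) x) (hF' : Integrable F') (hF : Integrable F) :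
    ∫ x, F' x = 0 := by
  have hbot : Tendsto F atBot (𝓝 0) :=
    tendsto_zero_of_hasDerivAt_of_integrableOn_Iic (a := -1)
      (fun x hx => hderiv x (by linarith [mem_Iic.mp hx])) hF'.integrableOn hF.integrableOn
  have htop : Tendsto F atTop (𝓝 0) :=
    tendsto_zero_of_hasDerivAt_of_integrableOn_Ioi (a := 0) (fun x hx => hderiv x hx.ne')
      hF'.integrableOn hF.integrableOn
  rw [← intervalIntegral.integral_Iic_add_Ioi hF'.integrableOn hF'.integrableOn (b := 0),
    integral_Iic_of_hasDerivAt_of_tendsto hcont.continuousWithinAt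
      (fun x hx => hderiv x hx.ne) hF'.integrableOn hbot,
    integral_Ioi_of_hasDerivAt_of_tendsto hcont.continuousWithinAt
      (fun x hx => hderiv x hx.ne') hF'.integrableOn htop]
  abel

theorem integrable_comp_abs_of_integrableOn_Ioi {E : Type*} [NormedAddCommGroup E] {f : ℝ → E}
    (hf : IntegrableOn f (Ioi 0)) : Integrable fun x => f |x| := by
  have hpos : IntegrableOn (fun x => f |x|) (Ioi 0) :=
    hf.congr_fun (fun x hx => by rw [abs_of_pos hx]) measurableSet_Ioi
  rw [← integrableOn_univ, ← Iic_union_Ioi (a := 0), integrableOn_union]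
  refine ⟨?_, hpos⟩
  have hneg : MeasurableEmbedding fun x : ℝ => -x := (Homeomorph.neg ℝ).measurableEmbedding
  rw [← Measure.map_neg_eq_self (volume : Measure ℝ), hneg.integrableOn_map_iff]
  simp_rw [Function.comp_def, abs_neg, neg_preimage, neg_Iic, neg_zero]
  exact Iff.mpr integrableOn_Ici_iff_integrableOn_Ioi hpos

theorem tendsto_mul_abs_rpow_nhds_zero {s : ℝ} (hs : -1 < s) :
    Tendsto (fun x : ℝ => x * |x| ^ s) (𝓝 0) (𝓝 0) := by
  have hs' : (0 : ℝ) < 1 + s := by linarith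
  have hlim : Tendsto (fun x : ℝ => |x| ^ (1 + s)) (𝓝 0) (𝓝 0) := by
    simpa [zero_rpow hs'.ne'] using (continuous_abs.tendsto (0 : ℝ)).rpow_const (Or.inr hs'.le)
  refine squeeze_zero_norm (fun x => ?_) hlim
  rw [norm_mul, Real.norm_eq_abs, norm_of_nonneg (rpow_nonneg (abs_nonneg x) s),
    rpow_add' (abs_nonneg x) hs'.ne', rpow_one]

theorem hasDerivAt_abs_rpow_of_ne_zero (s : ℝ) {x : ℝ} (hx : x ≠ 0) :
    HasDerivAt (fun y => |y| ^ s) (s * |x| ^ s / x) x := by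
  refine ((hasDerivAt_rpow_const (p := s) (Or.inl (abs_ne_zero.mpr hx))).comp x
    (hasDerivAt_abs hx)).congr_deriv ?_
  rw [rpow_sub_one (abs_ne_zero.mpr hx)]
  rcases hx.lt_or_gt with h | h
  · simp [abs_of_neg h, h]
    field_simp
  · simp [abs_of_pos h, h]
    field_simp

theorem exp_quartic_le (t x : ℝ) :
    exp (t * x ^ 2 - x ^ 4) ≤ exp ((t + 1) ^ 2 / 4) * exp (-x ^ 2) := by
  rw [← exp_add, exp_le_exp]
  nlinarith [sq_nonneg ((t + 1) / 2 - x ^ 2)]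

theorem integrable_abs_rpow_mul_exp_quartic {s : ℝ} (hs : -1 < s) (t : ℝ) :
    Integrable fun x : ℝ => |x| ^ s * exp (t * x ^ 2 - x ^ 4) := by
  have hIoi : IntegrableOn (fun y : ℝ => y ^ s * exp (t * y ^ 2 - y ^ 4)) (Ioi 0) := by
    refine ((integrableOn_rpow_mul_exp_neg_mul_sq one_pos hs).const_mul
      (exp ((t + 1) ^ 2 / 4))).mono' (by fun_prop) ?_
    filter_upwards [ae_restrict_mem measurableSet_Ioi] with y hy
    rw [Real.norm_eq_abs, abs_of_nonneg (mul_nonneg (rpow_nonneg hy.out.le s) (exp_pos _).le),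
      mul_left_comm, neg_one_mul]
    exact mul_le_mul_of_nonneg_left (exp_quartic_le t y) (rpow_nonneg (le_of_lt hy) s)
  refine (integrable_comp_abs_of_integrableOn_Ioi hIoi).congr (ae_of_all _ fun x => ?_)
  simp only [sq_abs, (by decide : Even 4).pow_abs]

noncomputable def freudWeight (lam t x : ℝ) : ℝ :=
  |x| ^ (2 * lam + 1) * exp (t * x ^ 2 - x ^ 4)

namespace freudWeight

variable {lam t : ℝ}

theorem nonneg (x : ℝ) : 0 ≤ freudWeight lam t x :=
  mul_nonneg (rpow_nonneg (abs_nonneg x) _) (exp_pos _).le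

theorem pos {x : ℝ} (hx : x ≠ 0) : 0 < freudWeight lam t x :=
  mul_pos (rpow_pos_of_pos (abs_pos.mpr hx) _) (exp_pos _)

theorem integrable_pow_mul (hlam : -1 < lam) (n : ℕ) :
    Integrable fun x => x ^ n * freudWeight lam t x := by
  have hs : -1 < 2 * lam + 1 + n := by linarith [n.cast_nonneg (α := ℝ)]
  refine (integrable_abs_rpow_mul_exp_quartic hs t).mono'
    (by unfold freudWeight; fun_prop) ?_
  filter_upwards [(countable_singleton (0 : ℝ)).ae_notMem volume] with x hx
  rw [freudWeight, norm_mul, norm_pow, Real.norm_eq_abs, norm_mul,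
    norm_of_nonneg (rpow_nonneg (abs_nonneg x) _), norm_of_nonneg (exp_pos _).le,
    rpow_add_natCast (abs_ne_zero.mpr hx)]
  exact le_of_eq (by ring)

theorem integrable_eval_mul (hlam : -1 < lam) (p : ℝ[X]) :
    Integrable fun x => p.eval x * freudWeight lam t x := by
  induction p using Polynomial.induction_on' with
  | add p q hp hq => exact (hp.add hq).congr (ae_of_all _ fun x => by simp [add_mul])
  | monomial n a => simpa [mul_assoc] using (integrable_pow_mul hlam n).const_mul a

theorem hasDerivAt {x : ℝ} (hx : x ≠ 0) :
    HasDerivAt (freudWeight lam t)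
      (((2 * lam + 1) / x + 2 * t * x - 4 * x ^ 3) * freudWeight lam t x) x := by
  have hexp : HasDerivAt (fun y => exp (t * y ^ 2 - y ^ 4))
      ((2 * t * x - 4 * x ^ 3) * exp (t * x ^ 2 - x ^ 4)) x := by
    have hpoly : HasDerivAt (fun y => t * y ^ 2 - y ^ 4) (2 * t * x - 4 * x ^ 3) x := by
      refine (((hasDerivAt_pow 2 x).const_mul t).fun_sub (hasDerivAt_pow 4 x)).congr_deriv ?_
      norm_num
      ring
    simpa [mul_comm] using hpoly.exp
  refine ((hasDerivAt_abs_rpow_of_ne_zero (2 * lam + 1) hx).mul hexp).congr_deriv ?_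
  rw [freudWeight]
  field_simp
  ring

end freudWeight

noncomputable def freudFunctional {lam : ℝ} (hlam : -1 < lam) (t : ℝ) : ℝ[X] →ₗ[ℝ] ℝ where
  toFun p := ∫ x, p.eval x * freudWeight lam t x
  map_add' p q := by
    simp only [eval_add, add_mul]
    exact integral_add (freudWeight.integrable_eval_mul hlam p)
      (freudWeight.integrable_eval_mul hlam q)
  map_smul' a p := by
    simp only [eval_smul, smul_eq_mul, mul_assoc, integral_const_mul, RingHom.id_apply]

namespace freudFunctional

variable {lam : ℝ} (hlam : -1 < lam) (t : ℝ)

theorem apply (p : ℝ[X]) : freudFunctional hlam t p = ∫ x, p.eval x * freudWeight lam t x := rfl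

theorem mul_self_pos {p : ℝ[X]} (hp : p ≠ 0) : 0 < freudFunctional hlam t (p * p) := by
  have hU : 0 < volume {x : ℝ | (X * p).eval x ≠ 0} :=
    (isOpen_ne_fun (X * p).continuous continuous_const).measure_pos volume
      (finite_setOfPred_isRoot (mul_ne_zero X_ne_zero hp)).infinite_compl.nonempty
  refine (integral_pos_iff_support_of_nonneg (fun x => ?_)
    (freudWeight.integrable_eval_mul hlam _)).mpr (hU.trans_le (measure_mono fun x hx => ?_))
  · exact mul_nonneg (by rw [eval_mul]; exact mul_self_nonneg _) (freudWeight.nonneg x)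
  · simp only [mem_ofPred_eq, eval_mul, eval_X, mul_ne_zero_iff] at hx
    rw [Function.mem_support, eval_mul]
    exact (mul_pos (_root_.mul_self_pos.mpr hx.2) (freudWeight.pos hx.1)).ne'

theorem pearson (g : ℝ[X]) :
    freudFunctional hlam t (derivative (X * g)) + (2 * lam + 1) * freudFunctional hlam t g
      + 2 * t * freudFunctional hlam t (X * (X * g))
      - 4 * freudFunctional hlam t (X ^ 3 * (X * g)) = 0 := by
  set D := derivative (X * g) + (2 * lam + 1) • g + (2 * t) • (X * (X * g))
    - (4 : ℝ) • (X ^ 3 * (X * g))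
  have hcont : ContinuousAt (fun x => (X * g).eval x * freudWeight lam t x) 0 := by
    have hexp : Continuous fun x => g.eval x * exp (t * x ^ 2 - x ^ 4) := by fun_prop
    have h := (hexp.tendsto 0).mul
      (tendsto_mul_abs_rpow_nhds_zero (by linarith : -1 < 2 * lam + 1))
    rw [mul_zero] at h
    refine (h.congr fun x => ?_).trans (by simp)
    simp only [eval_mul, eval_X, freudWeight]
    ring
  have hderiv : ∀ x ≠ 0, HasDerivAt (fun x => (X * g).eval x * freudWeight lam t x)
      (D.eval x * freudWeight lam t x) x := by
    intro x hx
    refine (((X * g).hasDerivAt x).mul (freudWeight.hasDerivAt hx)).congr_deriv ?_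
    simp only [D, eval_add, eval_sub, eval_smul, eval_mul, eval_X, eval_pow, smul_eq_mul,
      derivative_mul, derivative_X, one_mul]
    field_simp
    ring
  have hD : freudFunctional hlam t D = 0 :=
    integral_eq_zero_of_hasDerivAt_of_ne_zero hcont hderiv
      (freudWeight.integrable_eval_mul hlam D) (freudWeight.integrable_eval_mul hlam (X * g))
  simpa only [D, map_add, map_sub, map_smul, smul_eq_mul] using hD

end freudFunctional

theorem discrete_painleve_I_general (lam t : ℝ) (hlam : -1 < lam)
    (P : ℕ → Polynomial ℝ) (β : ℕ → ℝ)
    (hmonic : ∀ n, (P n).Monic) (hdeg : ∀ n, (P n).natDegree = n)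
    (horth : ∀ j k, j ≠ k →
      ∫ x : ℝ, (P j).eval x * (P k).eval x *
        (|x| ^ (2 * lam + 1) * Real.exp (t * x ^ 2 - x ^ 4)) = 0)
    (hβ0 : β 0 = 0)
    (hP0 : P 0 = 1) (hP1 : P 1 = X)
    (hrec : ∀ n, 1 ≤ n → P (n + 1) = X * P n - C (β n) * P (n - 1)) :
    ∀ n : ℕ, 1 ≤ n →
      4 * β n * (β (n - 1) + β n + β (n + 1)) - 2 * t * β n =
        (n : ℝ) + (lam + 1 / 2) * (1 - (-1 : ℝ) ^ n) := by
  have hP : IsMonicOrthogonal (freudFunctional hlam t) P :=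
    ⟨hmonic, hdeg, fun j k hjk => by
      simpa [freudFunctional.apply, freudWeight, mul_assoc] using horth j k hjk⟩
  have hrec' : ∀ k, X * P k = P (k + 1) + C (β k) * P (k - 1) := by
    rintro (_ | k)
    · simp [hP0, hP1, hβ0]
    · rw [hrec (k + 1) k.succ_pos]
      ring
  intro n hn
  obtain ⟨k, rfl⟩ := Nat.exists_eq_add_of_le' hn
  simpa using hP.discrete_painleve_I_of_pearson hrec' hβ0 (freudFunctional.pearson hlam t)
    (freudFunctional.mul_self_pos hlam t (hmonic k).ne_zero).ne'

/-- For `λ > −1`, `t ∈ ℝ` and `m = 2`, the recurrence coefficients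
`β_n(t;λ)` of the monic polynomials orthogonal with respect to the generalised quartic
Freud weight `|x|^{2λ+1} exp(t x² − x⁴)` satisfy the discrete Painlevé I equation
`4 β_n (β_{n−1} + β_n + β_{n+1}) − 2 t β_n = n + (λ + 1/2)(1 − (−1)ⁿ)` for all `n ≥ 1`
(with the convention `β₀ = 0`). -/
theorem discrete_painleve_I (lam t : ℝ) (hlam : -1 < lam)
    (P : ℕ → Polynomial ℝ) (β : ℕ → ℝ)
    (hmonic : ∀ n, (P n).Monic) (hdeg : ∀ n, (P n).natDegree = n)
    (horth : ∀ j k, j ≠ k →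
      ∫ x : ℝ, (P j).eval x * (P k).eval x *
        (|x| ^ (2 * lam + 1) * Real.exp (t * x ^ 2 - x ^ 4)) = 0)
    (hβ0 : β 0 = 0) (hβpos : ∀ n, 1 ≤ n → 0 < β n)
    (hP0 : P 0 = 1) (hP1 : P 1 = X)
    (hrec : ∀ n, 1 ≤ n → P (n + 1) = X * P n - C (β n) * P (n - 1)) :
    ∀ n : ℕ, 1 ≤ n →
      4 * β n * (β (n - 1) + β n + β (n + 1)) - 2 * t * β n =
        (n : ℝ) + (lam + 1 / 2) * (1 - (-1 : ℝ) ^ n) :=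
  discrete_painleve_I_general lam t hlam P β hmonic hdeg horth hβ0 hP0 hP1 hrec
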